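/- When restricted to 213-avoiding permutations, the middle order on S_n coincides with the Bruhat order. -/

import Mathlib

/-- The inversion sequence of a permutation `w` of `Fin n` (0-indexed values):
`invSeq w i` counts the values `j < i` appearing after `i` in one-line notation. -/
def invSeq {n : ℕ} (w : Equiv.Perm (Fin n)) (i : Fin n) : ℕ :=
  (Finset.univ.filter (fun j : Fin n => j < i ∧ w.symm i < w.symm j)).card

/-- The middle order on permutations: coordinate-wise comparison of inversion sequences. -/
def midLe {n : ℕ} (v w : Equiv.Perm (Fin n)) : Prop :=
  ∀ i, invSeq v i ≤ invSeq w i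

/-- Number of inversions of a permutation. -/
def inversions {n : ℕ} (w : Equiv.Perm (Fin n)) : ℕ :=
  (Finset.univ.filter (fun p : Fin n × Fin n => p.1 < p.2 ∧ w p.2 < w p.1)).card

/-- The (right) weak order on `S_n`: generated by covers turning an ascent into a
descent via an adjacent transposition of positions. -/
def weakLe {n : ℕ} : Equiv.Perm (Fin n) → Equiv.Perm (Fin n) → Prop :=
  Relation.ReflTransGen (fun v w => ∃ i : Fin n, ∃ h : (i : ℕ) + 1 < n,
    v i < v ⟨(i : ℕ) + 1, h⟩ ∧ w = v * Equiv.swap i ⟨(i : ℕ) + 1, h⟩)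

/-- The Bruhat order on `S_n`: generated by covers transposing two entries forming a
non-inversion and increasing the inversion count by exactly one. -/
def bruhatLe {n : ℕ} : Equiv.Perm (Fin n) → Equiv.Perm (Fin n) → Prop :=
  Relation.ReflTransGen (fun v w => ∃ i j : Fin n, i < j ∧ v i < v j ∧
    w = v * Equiv.swap i j ∧ inversions w = inversions v + 1)

/-- `w` avoids the pattern 213. -/
def Avoids213 {n : ℕ} (w : Equiv.Perm (Fin n)) : Prop :=
  ¬ ∃ i j k : Fin n, i < j ∧ j < k ∧ w j < w i ∧ w i < w k

/-!
Middle order implies Bruhat order for all permutations. If `invSeq v i < invSeq w i ≤ i`, some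
smaller value stands to the left of `i` in `v`; swapping `i` with the nearest such value `y`
(all entries strictly between them exceed `i`) is a Bruhat cover that raises `invSeq` by one at
`i` and changes no other coordinate, so one inducts on the inversion count.

Conversely, Bruhat order can only increase the counts `tailRank v p q = #{a ≥ p | v a < q}`.
If `v` avoids 213, the entries after `i` that are smaller than `i` fill a whole suffix of
positions `a ≥ m`; so `invSeq v i = tailRank v m i` is the largest possible value of that count,
which forces every entry of `w` at positions `≥ m` to be smaller than `i` as well, whence
`invSeq v i ≤ invSeq w i`.
-/

open Finset Equiv

lemma strictAntiOn_card_filter_Ioi {α : Type*} [LinearOrder α] [LocallyFiniteOrderTop α]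
    (P : α → Prop) [DecidablePred P] :
    StrictAntiOn (fun x => #{a ∈ Ioi x | P a}) {x | P x} := by
  intro x _ y hy hxy
  refine card_lt_card ⟨fun a ha => ?_, fun h => ?_⟩
  · simp only [mem_filter, mem_Ioi] at ha ⊢
    exact ⟨hxy.trans ha.1, ha.2⟩
  · simpa using h (mem_filter.2 ⟨mem_Ioi.2 hxy, hy⟩)

lemma card_filter_swap_apply {α : Type*} [DecidableEq α] {s : Finset α} (P : α → Prop)
    [DecidablePred P] {x y : α} (hx : x ∈ s) (hy : y ∈ s) :
    #{a ∈ s | P (swap x y a)} = #{a ∈ s | P a} := by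
  simp only [card_filter]
  refine (swap x y).sum_comp s (fun a => if P a then 1 else 0) fun a ha => ?_
  rcases (swap_apply_ne_self_iff.1 ha).2 with rfl | rfl <;> assumption

variable {n : ℕ}

lemma invSeq_eq_card_Iio (w : Perm (Fin n)) (i : Fin n) :
    invSeq w i = #{j ∈ Iio i | w.symm i < w.symm j} := by
  simp only [invSeq, filter_filter, ← filter_gt_eq_Iio]

lemma invSeq_eq_card_Ioi (w : Perm (Fin n)) (i : Fin n) :
    invSeq w i = #{a ∈ Ioi (w.symm i) | w a < i} := by
  rw [invSeq_eq_card_Iio]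
  exact card_nbij' w.symm w (fun _ _ => by simp_all) (fun _ _ => by simp_all)
    (fun _ _ => by simp) (fun _ _ => by simp)

lemma invSeq_le (w : Perm (Fin n)) (i : Fin n) : invSeq w i ≤ i := by
  rw [invSeq_eq_card_Iio, ← Fin.card_Iio i]
  exact card_filter_le _ _

lemma inversions_eq_sum_invSeq (w : Perm (Fin n)) : inversions w = ∑ i, invSeq w i := by
  rw [← Equiv.sum_comp w, inversions, card_filter, Fintype.sum_prod_type]
  refine sum_congr rfl fun b _ => ?_
  rw [invSeq_eq_card_Ioi, symm_apply_apply, ← filter_lt_eq_Ioi, filter_filter, card_filter]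

lemma invSeq_eq_card_Ioi_le (w : Perm (Fin n)) (i : Fin n) :
    invSeq w i = #{a ∈ Ioi (w.symm i) | w a ≤ i} := by
  refine (invSeq_eq_card_Ioi w i).trans (congrArg card (filter_congr fun a ha => ?_))
  have : w a ≠ i := fun h => (mem_Ioi.1 ha).ne' (w.eq_symm_apply.2 h)
  exact ⟨le_of_lt, (lt_of_le_of_ne · this)⟩

lemma invSeq_injective : Function.Injective (invSeq : Perm (Fin n) → Fin n → ℕ) := by
  intro v w h
  suffices ∀ i, v.symm i = w.symm i from symm_bijective.injective (Equiv.ext this)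
  -- Downward induction on values: once the positions of all values `> i` agree, the position
  -- of `i` among the remaining ones is determined by how many of them lie to its right.
  intro i
  induction i using WellFoundedGT.induction with
  | _ i ih =>
  have hle : ∀ a, v a ≤ i ↔ w a ≤ i := fun a => by
    simp only [← not_lt]
    refine not_congr ⟨fun ha => ?_, fun ha => ?_⟩
    · rwa [← (w.symm_apply_eq).1 ((ih _ ha).symm.trans (v.symm_apply_apply a))]
    · rwa [(v.symm_apply_eq).1 ((ih _ ha).trans (w.symm_apply_apply a))] at ha
  refine (strictAntiOn_card_filter_Ioi (fun a => v a ≤ i)).injOn (by simp) (by simp [hle]) ?_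
  simpa only [invSeq_eq_card_Ioi_le, hle] using congrFun h i

lemma symm_mul_swap_apply {α : Type*} [DecidableEq α] (v : Perm α) (a b k : α) :
    (v * swap a b).symm k = swap a b (v.symm k) := by
  simp [Perm.mul_def]

section Cover

variable {v : Perm (Fin n)} {a p : Fin n}

lemma invSeq_mul_swap_apply_right (hap : a < p) (hv : v a < v p)
    (hgap : ∀ b, a < b → b < p → v p < v b) :
    invSeq (v * swap a p) (v p) = invSeq v (v p) + 1 := by
  rw [invSeq_eq_card_Ioi, invSeq_eq_card_Ioi, ← card_insert_of_notMem (a := p) (by simp)]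
  congr 1
  ext c
  simp only [mem_filter, mem_Ioi, mem_insert, symm_mul_swap_apply, symm_apply_apply,
    swap_apply_right, Perm.mul_apply]
  rcases lt_trichotomy c p with hc | rfl | hc
  · rcases eq_or_ne c a with rfl | hca
    · simp [hc.ne, hc.not_gt]
    · rw [swap_apply_of_ne_of_ne hca hc.ne]
      exact ⟨fun h => absurd h.2 (hgap c h.1 hc).not_gt, by rintro (rfl | ⟨h, -⟩) <;> order⟩
  · simp [hap, hv]
  · rw [swap_apply_of_ne_of_ne (hap.trans hc).ne' hc.ne']
    simp [hc, hap.trans hc, hc.ne']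

lemma invSeq_mul_swap_apply_left (hap : a < p) (hv : v a < v p)
    (hgap : ∀ b, a < b → b < p → v p < v b) :
    invSeq (v * swap a p) (v a) = invSeq v (v a) := by
  rw [invSeq_eq_card_Ioi, invSeq_eq_card_Ioi]
  congr 1
  ext c
  simp only [mem_filter, mem_Ioi, symm_mul_swap_apply, symm_apply_apply, swap_apply_left,
    Perm.mul_apply]
  have hpc : a < c → v c < v a → p < c := fun hac hca => by
    rcases lt_trichotomy c p with hcp | rfl | hcp
    · exact absurd (hv.trans (hgap c hac hcp)) hca.not_gt
    · exact absurd hv hca.not_gt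
    · exact hcp
  constructor
  · rintro ⟨hc, h⟩
    rw [swap_apply_of_ne_of_ne (hap.trans hc).ne' hc.ne'] at h
    exact ⟨hap.trans hc, h⟩
  · rintro ⟨hc, h⟩
    have hc := hpc hc h
    rw [swap_apply_of_ne_of_ne (hap.trans hc).ne' hc.ne']
    exact ⟨hc, h⟩

lemma invSeq_mul_swap_of_ne_of_ne (hap : a < p) (hv : v a < v p)
    (hgap : ∀ b, a < b → b < p → v p < v b) {k : Fin n} (hka : k ≠ v a) (hkp : k ≠ v p) :
    invSeq (v * swap a p) k = invSeq v k := by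
  obtain ⟨P, rfl⟩ := v.surjective k
  rw [invSeq_eq_card_Ioi, invSeq_eq_card_Ioi, symm_mul_swap_apply, symm_apply_apply,
    swap_apply_of_ne_of_ne (ne_of_apply_ne v hka) (ne_of_apply_ne v hkp)]
  simp only [Perm.mul_apply]
  rcases lt_or_gt_of_ne (ne_of_apply_ne v hka) with hPa | hPa
  · exact card_filter_swap_apply (v · < v P) (mem_Ioi.2 hPa) (mem_Ioi.2 (hPa.trans hap))
  rcases lt_or_gt_of_ne (ne_of_apply_ne v hkp) with hPp | hPp
  · have hpP : v p < v P := hgap P hPa hPp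
    refine congrArg card (filter_congr fun c _ => ?_)
    rw [swap_apply_def]
    split_ifs with hca hcp
    · simp [hca, hpP, hv.trans hpP]
    · simp [hcp, hpP, hv.trans hpP]
    · rfl
  · refine congrArg card (filter_congr fun c hc => ?_)
    rw [swap_apply_of_ne_of_ne ((hap.trans hPp).trans (mem_Ioi.1 hc)).ne'
      (hPp.trans (mem_Ioi.1 hc)).ne']

lemma invSeq_mul_swap (hap : a < p) (hv : v a < v p)
    (hgap : ∀ b, a < b → b < p → v p < v b) :
    invSeq (v * swap a p) = invSeq v + Pi.single (v p) 1 := by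
  funext k
  rcases eq_or_ne k (v p) with rfl | hkp
  · simp [invSeq_mul_swap_apply_right hap hv hgap]
  rcases eq_or_ne k (v a) with rfl | hka
  · simp [hkp, invSeq_mul_swap_apply_left hap hv hgap]
  · simp [hkp, invSeq_mul_swap_of_ne_of_ne hap hv hgap hka hkp]

lemma exists_swap_of_invSeq_lt (h : invSeq v (v p) < v p) :
    ∃ a < p, v a < v p ∧ ∀ b, a < b → b < p → v p < v b := by
  have hne : {b ∈ Iio p | v b < v p}.Nonempty := by
    -- otherwise every value below `v p` stands right of `p`, and `invSeq v (v p) = v p`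
    by_contra hempty
    refine h.ne (le_antisymm (invSeq_le v (v p)) ?_)
    rw [invSeq_eq_card_Iio, symm_apply_apply, filter_true_of_mem fun j hj => ?_, Fin.card_Iio]
    by_contra! hjp
    have hjp' : v.symm j ≠ p := fun h' => (mem_Iio.1 hj).ne (by rw [← h', apply_symm_apply])
    exact hempty ⟨v.symm j, by simpa [lt_of_le_of_ne hjp hjp'] using hj⟩
  obtain ⟨a, ha, hmax⟩ := exists_max_image _ id hne
  rw [mem_filter, mem_Iio] at ha
  refine ⟨a, ha.1, ha.2, fun b hab hbp => ?_⟩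
  by_contra! hb
  exact (hmax b (mem_filter.2 ⟨mem_Iio.2 hbp, hb.lt_of_ne (v.injective.ne hbp.ne)⟩)).not_gt hab

end Cover

/-- `bruhatLe` is by definition the reflexive-transitive closure of this relation. -/
def BruhatCover (v w : Perm (Fin n)) : Prop :=
  ∃ i j : Fin n, i < j ∧ v i < v j ∧ w = v * swap i j ∧ inversions w = inversions v + 1

lemma BruhatCover.inversions_eq {v w : Perm (Fin n)} (h : BruhatCover v w) :
    inversions w = inversions v + 1 := by
  obtain ⟨-, -, -, -, -, h⟩ := h
  exact h

lemma midLe.inversions_le {v w : Perm (Fin n)} (h : midLe v w) : inversions v ≤ inversions w := by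
  simp only [inversions_eq_sum_invSeq]
  exact sum_le_sum fun i _ => h i

lemma midLe.exists_bruhatCover {v w : Perm (Fin n)} (h : midLe v w) (hne : v ≠ w) :
    ∃ v', BruhatCover v v' ∧ midLe v' w := by
  obtain ⟨i, hi⟩ : ∃ i, invSeq v i < invSeq w i := by
    by_contra! h'
    exact hne (invSeq_injective (funext fun i => le_antisymm (h i) (h' i)))
  obtain ⟨p, rfl⟩ := v.surjective i
  obtain ⟨a, hap, hv, hgap⟩ := exists_swap_of_invSeq_lt (hi.trans_le (invSeq_le w _))
  have hinv := invSeq_mul_swap hap hv hgap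
  refine ⟨v * swap a p, ⟨a, p, hap, hv, rfl, ?_⟩, fun k => ?_⟩
  · simp [inversions_eq_sum_invSeq, hinv, sum_add_distrib]
  · rcases eq_or_ne k (v p) with rfl | hk
    · simpa [hinv] using hi
    · simpa [hinv, hk] using h k

theorem bruhatLe_of_midLe {v w : Perm (Fin n)} (h : midLe v w) : bruhatLe v w := by
  by_cases hvw : v = w
  · exact hvw ▸ .refl
  obtain ⟨v', hcov, h'⟩ := h.exists_bruhatCover hvw
  exact .head hcov (bruhatLe_of_midLe h')
termination_by inversions w - inversions v
decreasing_by
  have := hcov.inversions_eq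
  have := h'.inversions_le
  omega

def tailRank (v : Perm (Fin n)) (p q : Fin n) : ℕ := #{a ∈ Ici p | v a < q}

lemma tailRank_le_tailRank_mul_swap {v : Perm (Fin n)} {x y : Fin n} (hxy : x < y)
    (hv : v x < v y) (p q : Fin n) : tailRank v p q ≤ tailRank (v * swap x y) p q := by
  unfold tailRank
  rcases le_or_gt p x with hpx | hxp
  · exact (card_filter_swap_apply (v · < q) (mem_Ici.2 hpx) (mem_Ici.2 (hpx.trans hxy.le))).ge
  refine card_le_card fun a ha => ?_
  rw [mem_filter] at ha ⊢
  rw [Perm.mul_apply]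
  refine ⟨ha.1, ?_⟩
  rcases eq_or_ne a y with rfl | hay
  · rw [swap_apply_right]
    exact hv.trans ha.2
  · rw [swap_apply_of_ne_of_ne (hxp.trans_le (mem_Ici.1 ha.1)).ne' hay]
    exact ha.2

lemma bruhatLe.tailRank_le {v w : Perm (Fin n)} (h : bruhatLe v w) (p q : Fin n) :
    tailRank v p q ≤ tailRank w p q := by
  induction h with
  | refl => exact le_rfl
  | tail _ hstep ih =>
    obtain ⟨x, y, hxy, hv, rfl, -⟩ := hstep
    exact ih.trans (tailRank_le_tailRank_mul_swap hxy hv p q)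

lemma tailRank_eq_card_Ici_iff {w : Perm (Fin n)} {m q : Fin n} :
    tailRank w m q = #(Ici m) ↔ ∀ a, m ≤ a → w a < q := by
  simp only [tailRank, card_filter_eq_iff, mem_Ici]

lemma card_Ici_le_invSeq {w : Perm (Fin n)} {m i : Fin n} (h : ∀ a, m ≤ a → w a < i) :
    #(Ici m) ≤ invSeq w i := by
  have hm : w.symm i < m := by
    by_contra! hm
    simpa using h _ hm
  rw [invSeq_eq_card_Ioi]
  exact card_le_card fun a ha =>
    mem_filter.2 ⟨mem_Ioi.2 (hm.trans_le (mem_Ici.1 ha)), h a (mem_Ici.1 ha)⟩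

lemma Avoids213.lt_of_le {v : Perm (Fin n)} (hv : Avoids213 v) {i m a : Fin n}
    (hm : v.symm i < m) (hmi : v m < i) (hma : m ≤ a) : v a < i := by
  rcases hma.eq_or_lt with rfl | hma
  · exact hmi
  by_contra! hia
  have hai : v a ≠ i := fun h => (hm.trans hma).ne' (v.eq_symm_apply.2 h)
  exact hv ⟨v.symm i, m, a, hm, hma, by simpa using hmi, by simpa using hia.lt_of_ne' hai⟩

theorem Avoids213.midLe_of_tailRank_le {v w : Perm (Fin n)} (hv : Avoids213 v)
    (h : ∀ p q, tailRank v p q ≤ tailRank w p q) : midLe v w := by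
  intro i
  rw [invSeq_eq_card_Ioi]
  set s := {a ∈ Ioi (v.symm i) | v a < i}
  rcases s.eq_empty_or_nonempty with hs | hs
  · simp [hs]
  set m := s.min' hs
  obtain ⟨hm, hmi⟩ := mem_filter.1 (s.min'_mem hs)
  have hv_tail : ∀ a, m ≤ a → v a < i := fun a => hv.lt_of_le (mem_Ioi.1 hm) hmi
  have hw_tail : ∀ a, m ≤ a → w a < i := tailRank_eq_card_Ici_iff.1 <| le_antisymm
    (card_filter_le _ _) ((tailRank_eq_card_Ici_iff.2 hv_tail).symm.trans_le (h m i))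
  calc #s ≤ #(Ici m) := card_le_card fun a ha => mem_Ici.2 (s.min'_le a ha)
    _ ≤ invSeq w i := card_Ici_le_invSeq hw_tail

theorem middle_eq_bruhat_on_213_avoiders_general (n : ℕ) (v w : Equiv.Perm (Fin n))
    (hv : Avoids213 v) :
    midLe v w ↔ bruhatLe v w :=
  ⟨bruhatLe_of_midLe, fun h => hv.midLe_of_tailRank_le h.tailRank_le⟩

/-- On 213-avoiding permutations, the middle order coincides with the Bruhat order. -/
theorem middle_eq_bruhat_on_213_avoiders (n : ℕ) (v w : Equiv.Perm (Fin n))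
    (hv : Avoids213 v) (hw : Avoids213 w) :
    midLe v w ↔ bruhatLe v w :=
  middle_eq_bruhat_on_213_avoiders_general n v w hv
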